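/- Let (u,v) : I → ℝ² be a C² solution of the Levi-Civita regularized RTBP system on an interval I on which r₂ > 0. Then the function s ↦ u′(s)² + v′(s)² − W(u(s),v(s)) is constant on I, where W(u,v) = 4(u²+v²)[(1−μ)(u²+v²)² + μ((1+u²−v²)² + 4u²v²)] + 8(1−μ) + 8μ(u²+v²)/r₂ − 4C(u²+v²). In particular, if a solution satisfies u′² + v′² = W(u,v) at some time and u(s₀) = v(s₀) = 0 at some time s₀ ∈ I, then u′(s₀)² + v′(s₀)² = 8(1−μ). -/

import Mathlib

open Real Set

noncomputable section

/-- The distance `r₂` to the second primary in Levi-Civita coordinates. -/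
def lcR2 (u v : ℝ) : ℝ := Real.sqrt ((1+u^2-v^2)^2 + 4*u^2*v^2)

/-- `(u,v)` is a solution of the Levi-Civita regularized RTBP system on `I`. -/
def IsLCSolOn (μ C : ℝ) (u v : ℝ → ℝ) (I : Set ℝ) : Prop :=
  ∀ s ∈ I,
    (DifferentiableAt ℝ u s ∧ DifferentiableAt ℝ v s ∧
     DifferentiableAt ℝ (deriv u) s ∧ DifferentiableAt ℝ (deriv v) s) ∧
    deriv (deriv u) s - 8*((u s)^2+(v s)^2)*(deriv v s) =
      4*μ*u s + 16*μ*(u s)^3 + 12*((u s)^2+(v s)^2)^2*(u s)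
      + 8*μ*(u s)/lcR2 (u s) (v s)
      - 8*μ*(u s)*((u s)^2+(v s)^2)*((u s)^2+(v s)^2+1)/(lcR2 (u s) (v s))^3
      - 4*C*(u s) ∧
    deriv (deriv v) s + 8*((u s)^2+(v s)^2)*(deriv u s) =
      4*μ*v s - 16*μ*(v s)^3 + 12*((u s)^2+(v s)^2)^2*(v s)
      + 8*μ*(v s)/lcR2 (u s) (v s)
      - 8*μ*(v s)*((u s)^2+(v s)^2)*((u s)^2+(v s)^2-1)/(lcR2 (u s) (v s))^3
      - 4*C*(v s)

/-- The function `W(u,v)` appearing in the regularized Jacobi integral. -/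
def W (μ C u v : ℝ) : ℝ :=
  4*(u^2+v^2)*((1-μ)*(u^2+v^2)^2 + μ*((1+u^2-v^2)^2+4*u^2*v^2))
  + 8*(1-μ) + 8*μ*(u^2+v^2)/lcR2 u v - 4*C*(u^2+v^2)

/-!
In complex notation `z = u + iv` the system reads `z″ + 8i|z|² z′ = ½ ∇W(z)`. The gyroscopic
term is orthogonal to the velocity, so `d/ds (|z′|² − W(z)) = 2⟨z′, z″ − ½ ∇W(z)⟩ = 0` on `I`.
At the collision `z = 0` one has `r₂ = 1`, hence `W = 8(1 − μ)`.
-/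

/-- The right-hand sides of the system are `½ ∂W/∂u` and `½ ∂W/∂v`. -/
def lcForceU (μ C u v : ℝ) : ℝ :=
  4*μ*u + 16*μ*u^3 + 12*(u^2+v^2)^2*u
      + 8*μ*u/lcR2 u v
      - 8*μ*u*(u^2+v^2)*(u^2+v^2+1)/(lcR2 u v)^3
      - 4*C*u

def lcForceV (μ C u v : ℝ) : ℝ :=
  4*μ*v - 16*μ*v^3 + 12*(u^2+v^2)^2*v
      + 8*μ*v/lcR2 u v
      - 8*μ*v*(u^2+v^2)*(u^2+v^2-1)/(lcR2 u v)^3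
      - 4*C*v

theorem Convex.eq_of_hasDerivAt_zero {E : Type*} [NormedAddCommGroup E] [NormedSpace ℝ E]
    {f : ℝ → E} {s : Set ℝ} (hs : Convex ℝ s) (hf : ∀ x ∈ s, HasDerivAt f 0 x)
    {x y : ℝ} (hx : x ∈ s) (hy : y ∈ s) : f x = f y := by
  simpa only [(dist_eq_norm _ _).symm, zero_mul, dist_le_zero, eq_comm] using
    hs.norm_image_sub_le_of_norm_hasDerivWithin_le (f' := fun _ => 0) (C := 0)
      (fun x hx => (hf x hx).hasDerivWithinAt) (fun _ _ => by simp) hx hy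

section PathDerivatives

variable {u v : ℝ → ℝ} {u' v' s : ℝ}

theorem hasDerivAt_lcR2_comp (hu : HasDerivAt u u' s) (hv : HasDerivAt v v' s)
    (hr : 0 < lcR2 (u s) (v s)) :
    HasDerivAt (fun t => lcR2 (u t) (v t))
      (2 * (u s * (1 + u s ^ 2 + v s ^ 2) * u' + v s * (u s ^ 2 + v s ^ 2 - 1) * v')
        / lcR2 (u s) (v s)) s := by
  have hsq := (((hu.fun_pow 2).const_add 1).fun_sub (hv.fun_pow 2)).fun_pow 2 |>.fun_add
    (((hu.fun_pow 2).const_mul 4).fun_mul (hv.fun_pow 2))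
  refine (hsq.sqrt (Real.sqrt_pos.mp hr).ne').congr_deriv ?_
  simp only [lcR2]
  push_cast
  ring

theorem hasDerivAt_W_comp (μ C : ℝ) (hu : HasDerivAt u u' s) (hv : HasDerivAt v v' s)
    (hr : 0 < lcR2 (u s) (v s)) :
    HasDerivAt (fun t => W μ C (u t) (v t))
      (2 * (lcForceU μ C (u s) (v s) * u' + lcForceV μ C (u s) (v s) * v')) s := by
  have hq := (hu.fun_pow 2).fun_add (hv.fun_pow 2)
  have hpoly := (hq.const_mul 4).fun_mul (((hq.fun_pow 2).const_mul (1 - μ)).fun_add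
    ((((hu.fun_pow 2).const_add 1).fun_sub (hv.fun_pow 2)).fun_pow 2 |>.fun_add
      (((hu.fun_pow 2).const_mul 4).fun_mul (hv.fun_pow 2)) |>.const_mul μ))
  have hquot := (hq.const_mul (8 * μ)).fun_div (hasDerivAt_lcR2_comp hu hv hr) hr.ne'
  refine (((hpoly.add_const (8 * (1 - μ))).fun_add hquot).fun_sub
    (hq.const_mul (4 * C))).congr_deriv ?_
  simp only [lcForceU, lcForceV]
  push_cast
  field_simp
  ring

end PathDerivatives

theorem IsLCSolOn.hasDerivAt_jacobiIntegral {μ C : ℝ} {u v : ℝ → ℝ} {I : Set ℝ}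
    (hsol : IsLCSolOn μ C u v I) (hr : ∀ s ∈ I, 0 < lcR2 (u s) (v s)) {s : ℝ} (hs : s ∈ I) :
    HasDerivAt (fun t => deriv u t ^ 2 + deriv v t ^ 2 - W μ C (u t) (v t)) 0 s := by
  obtain ⟨⟨hu, hv, hu', hv'⟩, hequ, heqv⟩ := hsol s hs
  have hequ : deriv (deriv u) s - 8 * (u s^2 + v s^2) * deriv v s
      = lcForceU μ C (u s) (v s) := hequ
  have heqv : deriv (deriv v) s + 8 * (u s^2 + v s^2) * deriv u s
      = lcForceV μ C (u s) (v s) := heqv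
  refine (((hu'.hasDerivAt.fun_pow 2).fun_add (hv'.hasDerivAt.fun_pow 2)).fun_sub
    (hasDerivAt_W_comp μ C hu.hasDerivAt hv.hasDerivAt (hr s hs))).congr_deriv ?_
  push_cast
  linear_combination (2 * deriv u s : ℝ) * hequ + (2 * deriv v s : ℝ) * heqv

theorem W_zero_zero (μ C : ℝ) : W μ C 0 0 = 8 * (1 - μ) := by
  norm_num [W, lcR2]

theorem regularized_jacobi_integral_general (μ C : ℝ) (I : Set ℝ) (hI : I.OrdConnected) (u v : ℝ → ℝ)
    (hsol : IsLCSolOn μ C u v I)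
    (hr2 : ∀ s ∈ I, 0 < lcR2 (u s) (v s)) :
    (∀ s₁ ∈ I, ∀ s₂ ∈ I,
      (deriv u s₁)^2 + (deriv v s₁)^2 - W μ C (u s₁) (v s₁) =
      (deriv u s₂)^2 + (deriv v s₂)^2 - W μ C (u s₂) (v s₂)) ∧
    ((∃ s₁ ∈ I, (deriv u s₁)^2 + (deriv v s₁)^2 = W μ C (u s₁) (v s₁)) →
      ∀ s₀ ∈ I, u s₀ = 0 → v s₀ = 0 →
        (deriv u s₀)^2 + (deriv v s₀)^2 = 8*(1-μ)) := by
  have hconst : ∀ s₁ ∈ I, ∀ s₂ ∈ I,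
      (deriv u s₁)^2 + (deriv v s₁)^2 - W μ C (u s₁) (v s₁) =
      (deriv u s₂)^2 + (deriv v s₂)^2 - W μ C (u s₂) (v s₂) := fun s₁ h₁ s₂ h₂ =>
    hI.convex.eq_of_hasDerivAt_zero (fun s hs => hsol.hasDerivAt_jacobiIntegral hr2 hs) h₁ h₂
  refine ⟨hconst, ?_⟩
  rintro ⟨s₁, hs₁, hlevel⟩ s₀ hs₀ hu₀ hv₀
  have h := hconst s₀ hs₀ s₁ hs₁
  rw [hu₀, hv₀, W_zero_zero, hlevel, sub_self] at h
  linarith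

/-- **Regularized Jacobi integral**: along a solution of the Levi-Civita regularized
system on which `r₂ > 0`, the quantity `u′² + v′² − W(u,v)` is constant; in particular,
on the zero level of this quantity, at a collision `u = v = 0` the velocity satisfies
`u′² + v′² = 8(1−μ)`. -/
theorem regularized_jacobi_integral (μ C : ℝ) (hμ : μ ∈ Set.Ioo (0:ℝ) 1)
    (I : Set ℝ) (hI : I.OrdConnected) (u v : ℝ → ℝ)
    (hsol : IsLCSolOn μ C u v I)
    (hr2 : ∀ s ∈ I, 0 < lcR2 (u s) (v s)) :
    (∀ s₁ ∈ I, ∀ s₂ ∈ I,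
      (deriv u s₁)^2 + (deriv v s₁)^2 - W μ C (u s₁) (v s₁) =
      (deriv u s₂)^2 + (deriv v s₂)^2 - W μ C (u s₂) (v s₂)) ∧
    ((∃ s₁ ∈ I, (deriv u s₁)^2 + (deriv v s₁)^2 = W μ C (u s₁) (v s₁)) →
      ∀ s₀ ∈ I, u s₀ = 0 → v s₀ = 0 →
        (deriv u s₀)^2 + (deriv v s₀)^2 = 8*(1-μ)) :=
  regularized_jacobi_integral_general μ C I hI u v hsol hr2

end
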